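/- arXiv:math/0412300 — 4 statements merged into one kernel-verified Lean document; each statement's English description precedes it below -/
import Mathlib

section
/- Let f : ℝ^n → ℝ be a function such that for every y ∈ ℤ^n there exists a real number a_y with f(x) ≥ ⟨y, x⟩ - a_y for all x ∈ ℝ^n. Then f is superlinear, i.e. f(x)/‖x‖ → ∞ as ‖x‖ → ∞. -/
lemma euclid_norm_le_sum_abs (n : ℕ) (x : EuclideanSpace ℝ (Fin n)) :
    ‖x‖ ≤ ∑ i, |x i| := by
  rw [EuclideanSpace.norm_eq]
  have h1 : ∑ i, ‖x i‖ ^ 2 ≤ (∑ i, |x i|) ^ 2 := by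
    simp only [Real.norm_eq_abs]
    exact Finset.sum_sq_le_sq_sum_of_nonneg (fun i _ => abs_nonneg _)
  have h2 : Real.sqrt ((∑ i, |x i|) ^ 2) = ∑ i, |x i| :=
    Real.sqrt_sq (Finset.sum_nonneg fun i _ => abs_nonneg _)
  exact h2 ▸ Real.sqrt_le_sqrt h1

/-- If `f : ℝ^n → ℝ` satisfies: for every `y ∈ ℤ^n` there is `a_y` with
`f x ≥ ⟨y, x⟩ - a_y` for all `x`, then `f` is superlinear: for every `K`
there is `C` with `f x ≥ K‖x‖ - C` for all `x`. -/
theorem stmt_0 (n : ℕ) (f : EuclideanSpace ℝ (Fin n) → ℝ)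
    (h : ∀ y : Fin n → ℤ, ∃ a : ℝ, ∀ x : EuclideanSpace ℝ (Fin n),
      f x ≥ (∑ i, (y i : ℝ) * x i) - a) :
    ∀ K : ℝ, ∃ C : ℝ, ∀ x : EuclideanSpace ℝ (Fin n), f x ≥ K * ‖x‖ - C := by
  intro K
  set M : ℤ := ⌈max K 0⌉ with hM
  have hMK : (K : ℝ) ≤ (M : ℝ) := le_trans (le_max_left _ _) (Int.le_ceil _)
  have hM0 : (0 : ℝ) ≤ (M : ℝ) := le_trans (le_max_right _ _) (Int.le_ceil _)
  -- for each sign pattern s, choose a bound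
  choose a ha using fun s : Fin n → Bool =>
    h (fun i => if s i then M else -M)
  refine ⟨∑ s : Fin n → Bool, |a s|, ?_⟩
  intro x
  set s : Fin n → Bool := fun i => decide (0 ≤ x i) with hs
  have key : f x ≥ (∑ i, ((if s i then M else -M : ℤ) : ℝ) * x i) - a s := ha s x
  have hsum : ∑ i, ((if s i then M else -M : ℤ) : ℝ) * x i = (M : ℝ) * ∑ i, |x i| := by
    rw [Finset.mul_sum]
    apply Finset.sum_congr rfl
    intro i _
    by_cases hxi : 0 ≤ x i
    · simp [hs, hxi, abs_of_nonneg hxi]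
    · push_neg at hxi
      simp [hs, not_le.mpr hxi, abs_of_neg hxi]
  have hC : a s ≤ ∑ t : Fin n → Bool, |a t| :=
    le_trans (le_abs_self _)
      (Finset.single_le_sum (f := fun t => |a t|) (fun t _ => abs_nonneg _) (Finset.mem_univ s))
  have hnorm : ‖x‖ ≤ ∑ i, |x i| := euclid_norm_le_sum_abs n x
  have h1 : K * ‖x‖ ≤ (M : ℝ) * ∑ i, |x i| := by
    calc K * ‖x‖ ≤ (M : ℝ) * ‖x‖ := mul_le_mul_of_nonneg_right hMK (norm_nonneg x)
      _ ≤ (M : ℝ) * ∑ i, |x i| := mul_le_mul_of_nonneg_left hnorm hM0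
  rw [hsum] at key
  linarith
end

section
/- Let M be a smooth compact manifold and let u, v : M → ℝ be semi-concave functions. If x is a point where u + v attains its minimum over M, then both u and v are differentiable at x and du_x = −dv_x. -/
open scoped Manifold

open Metric Set Filter Topology

section Aux
variable {E : Type*} [NormedAddCommGroup E] [NormedSpace ℝ E]

/-- A continuous linear functional bounded below by a quadratic near `0` vanishes. -/
lemma linear_eq_zero_of_quadratic_lower {L : E →L[ℝ] ℝ} {C r : ℝ} (hr : 0 < r)
    (h : ∀ z : E, ‖z‖ < r → -(C * ‖z‖ ^ 2) ≤ L z) : L = 0 := by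
  have key : ∀ z : E, 0 ≤ L z := by
    intro z
    have hz1 : (0 : ℝ) < ‖z‖ + 1 := by positivity
    have hδ : 0 < r / (‖z‖ + 1) := by positivity
    have h2 : ∀ t ∈ Ioo (0 : ℝ) (r / (‖z‖ + 1)), -(C * ‖z‖ ^ 2) * t ≤ L z := by
      intro t ht
      have htz : ‖t • z‖ < r := by
        rw [norm_smul, Real.norm_eq_abs, abs_of_pos ht.1]
        calc t * ‖z‖ ≤ t * (‖z‖ + 1) := by nlinarith [ht.1.le]
          _ < r := (lt_div_iff₀ hz1).1 ht.2
      have hH := h (t • z) htz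
      rw [map_smul, smul_eq_mul, norm_smul, Real.norm_eq_abs, abs_of_pos ht.1] at hH
      nlinarith [ht.1]
    have htend : Tendsto (fun t : ℝ => -(C * ‖z‖ ^ 2) * t) (𝓝[>] (0 : ℝ)) (𝓝 0) := by
      have h3 : Tendsto (fun t : ℝ => -(C * ‖z‖ ^ 2) * t) (𝓝 (0 : ℝ)) (𝓝 (-(C * ‖z‖ ^ 2) * 0)) :=
        (continuous_const.mul continuous_id).tendsto 0
      rw [mul_zero] at h3
      exact h3.mono_left nhdsWithin_le_nhds
    refine le_of_tendsto htend ?_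
    filter_upwards [Ioo_mem_nhdsGT hδ] with t ht using h2 t ht
  ext z
  have h1 := key z
  have h2 := key (-z)
  rw [map_neg] at h2
  simpa using le_antisymm (by linarith) h1

/-- A function admitting a quadratic two-sided bound around a linear map is differentiable. -/
lemma hasFDerivAt_of_quadratic_bound {φ : E → ℝ} {P : E →L[ℝ] ℝ} {x₀ : E} {C r : ℝ}
    (hr : 0 < r) (h : ∀ y ∈ ball x₀ r, |φ y - φ x₀ - P (y - x₀)| ≤ C * ‖y - x₀‖ ^ 2) :
    HasFDerivAt φ P x₀ := by
  rw [hasFDerivAt_iff_isLittleO_nhds_zero]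
  rw [Asymptotics.isLittleO_iff]
  intro c hc
  have hδ : 0 < min r (c / (|C| + 1)) := lt_min hr (by positivity)
  filter_upwards [ball_mem_nhds (0 : E) hδ] with z hz
  have hz' : ‖z‖ < min r (c / (|C| + 1)) := by
    simpa [dist_eq_norm] using hz
  have hy1 : x₀ + z ∈ ball x₀ r := by
    rw [mem_ball_iff_norm, add_sub_cancel_left]
    exact lt_of_lt_of_le hz' (min_le_left _ _)
  have hC1 : (0 : ℝ) < |C| + 1 := by positivity
  have h3 : ‖z‖ * (|C| + 1) < c := (lt_div_iff₀ hC1).1 (lt_of_lt_of_le hz' (min_le_right _ _))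
  have h4 := h (x₀ + z) hy1
  rw [add_sub_cancel_left] at h4
  rw [Real.norm_eq_abs]
  nlinarith [norm_nonneg z, le_abs_self C, abs_nonneg C,
    abs_nonneg (φ (x₀ + z) - φ x₀ - P z)]

/-- Existence of a supergradient for a concave function at the center of a ball. -/
lemma exists_supergradient [FiniteDimensional ℝ E] {F : E → ℝ} {x₀ : E} {r : ℝ} (hr : 0 < r)
    (hF : ConcaveOn ℝ (ball x₀ r) F) :
    ∃ p : E →L[ℝ] ℝ, ∀ y ∈ ball x₀ r, F y ≤ F x₀ + p (y - x₀) := by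
  have hcont : ContinuousOn F (ball x₀ r) := hF.continuousOn isOpen_ball
  have hHconv : Convex ℝ {z : E × ℝ | z.1 ∈ ball x₀ r ∧ z.2 < F z.1} :=
    hF.convex_strict_hypograph
  have hHopen : IsOpen {z : E × ℝ | z.1 ∈ ball x₀ r ∧ z.2 < F z.1} := by
    have hco : ContinuousOn (fun z : E × ℝ => F z.1 - z.2) (ball x₀ r ×ˢ (univ : Set ℝ)) := by
      refine ContinuousOn.sub ?_ continuous_snd.continuousOn
      exact hcont.comp continuous_fst.continuousOn fun z hz => hz.1
    have h1 := hco.isOpen_inter_preimage (t := Ioi (0 : ℝ))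
      (isOpen_ball.prod isOpen_univ) isOpen_Ioi
    convert h1 using 1
    ext z
    simp only [mem_setOf_eq, mem_inter_iff, mem_prod, mem_univ, and_true, mem_preimage,
      mem_Ioi, sub_pos]
  have hnotmem : (x₀, F x₀) ∉ {z : E × ℝ | z.1 ∈ ball x₀ r ∧ z.2 < F z.1} :=
    fun hmem => lt_irrefl _ hmem.2
  obtain ⟨L, hL⟩ := geometric_hahn_banach_open_point hHconv hHopen hnotmem
  set ℓ : E →L[ℝ] ℝ := L.comp (ContinuousLinearMap.inl ℝ E ℝ) with hℓ
  set β : ℝ := L (0, 1) with hβdef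
  have hdecomp : ∀ (y : E) (t : ℝ), L (y, t) = ℓ y + t * β := by
    intro y t
    have h1 : (y, t) = (y, (0 : ℝ)) + t • ((0 : E), (1 : ℝ)) := by
      simp [Prod.ext_iff]
    rw [h1, map_add, map_smul, smul_eq_mul]
    rfl
  have hβ : 0 < β := by
    have h1 : (x₀, F x₀ - 1) ∈ {z : E × ℝ | z.1 ∈ ball x₀ r ∧ z.2 < F z.1} :=
      ⟨mem_ball_self hr, by show F x₀ - 1 < F x₀; linarith⟩
    have h2 := hL _ h1
    rw [hdecomp, hdecomp] at h2
    nlinarith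
  have hclosed : ∀ y ∈ ball x₀ r, ℓ y + F y * β ≤ ℓ x₀ + F x₀ * β := by
    intro y hy
    by_contra hcon
    push_neg at hcon
    set ε : ℝ := (ℓ y + F y * β - (ℓ x₀ + F x₀ * β)) / (2 * β) with hε
    have hεpos : 0 < ε := div_pos (by linarith) (by linarith)
    have hmem : (y, F y - ε) ∈ {z : E × ℝ | z.1 ∈ ball x₀ r ∧ z.2 < F z.1} :=
      ⟨hy, by show F y - ε < F y; linarith⟩
    have h2 := hL _ hmem
    rw [hdecomp, hdecomp] at h2
    have hεβ : ε * β = (ℓ y + F y * β - (ℓ x₀ + F x₀ * β)) / 2 := by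
      rw [hε]
      field_simp
    nlinarith
  refine ⟨-(β⁻¹ • ℓ), fun y hy => ?_⟩
  have h2 : β⁻¹ * (ℓ y - ℓ x₀) ≤ β⁻¹ * ((F x₀ - F y) * β) :=
    mul_le_mul_of_nonneg_left (by linarith [hclosed y hy]) (inv_nonneg.2 hβ.le)
  have h3 : β⁻¹ * ((F x₀ - F y) * β) = F x₀ - F y := by
    field_simp
  have h4 : (-(β⁻¹ • ℓ) : E →L[ℝ] ℝ) (y - x₀) = -(β⁻¹ * (ℓ y - ℓ x₀)) := by
    simp [map_sub]
    ring
  rw [h4]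
  linarith

end Aux

/-- A function on a manifold charted on `ℝ^d` is semi-concave if, for some
constant `K`, in each chart `u(y) - K‖y‖²` is concave. -/
def IsSemiconcaveM {d : ℕ} {M : Type*} [TopologicalSpace M]
    [ChartedSpace (EuclideanSpace ℝ (Fin d)) M] (u : M → ℝ) : Prop :=
  ∃ K : ℝ, ∀ x : M,
    ConcaveOn ℝ (extChartAt (𝓡 d) x).target
      (fun y => u ((extChartAt (𝓡 d) x).symm y) - K * ‖y‖ ^ 2)

/-- If `u` and `v` are semi-concave on a smooth compact manifold `M` and `x`
is a point where `u + v` attains its minimum over `M`, then `u` and `v` are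
differentiable at `x` and `du_x = -dv_x`. -/
theorem stmt_2 {d : ℕ} {M : Type*} [TopologicalSpace M]
    [ChartedSpace (EuclideanSpace ℝ (Fin d)) M]
    [IsManifold (𝓡 d) (⊤ : ℕ∞) M] [CompactSpace M]
    (u v : M → ℝ) (hu : IsSemiconcaveM (d := d) u) (hv : IsSemiconcaveM (d := d) v)
    (x : M) (hx : ∀ y : M, u x + v x ≤ u y + v y) :
    MDifferentiableAt (𝓡 d) 𝓘(ℝ, ℝ) u x ∧ MDifferentiableAt (𝓡 d) 𝓘(ℝ, ℝ) v x ∧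
      mfderiv (𝓡 d) 𝓘(ℝ, ℝ) u x = - mfderiv (𝓡 d) 𝓘(ℝ, ℝ) v x := by
  classical
  obtain ⟨Ku, hKu⟩ := hu
  obtain ⟨Kv, hKv⟩ := hv
  set e := extChartAt (𝓡 d) x with he
  set x₀ : EuclideanSpace ℝ (Fin d) := e x with hx₀def
  have hxsrc : x ∈ e.source := mem_extChartAt_source x
  have hx₀tgt : x₀ ∈ e.target := e.map_source hxsrc
  obtain ⟨r, hr, hball⟩ := Metric.isOpen_iff.1 (isOpen_extChartAt_target x) x₀ hx₀tgt
  set φ : EuclideanSpace ℝ (Fin d) → ℝ := fun y => u (e.symm y) with hφdef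
  set ψ : EuclideanSpace ℝ (Fin d) → ℝ := fun y => v (e.symm y) with hψdef
  have hφx₀ : φ x₀ = u x := by
    simp only [hφdef, hx₀def]
    rw [e.left_inv hxsrc]
  have hψx₀ : ψ x₀ = v x := by
    simp only [hψdef, hx₀def]
    rw [e.left_inv hxsrc]
  -- concavity in the chart, restricted to the ball
  have hFu : ConcaveOn ℝ (ball x₀ r) (fun y => φ y - Ku * ‖y‖ ^ 2) :=
    (hKu x).subset hball (convex_ball _ _)
  have hFv : ConcaveOn ℝ (ball x₀ r) (fun y => ψ y - Kv * ‖y‖ ^ 2) :=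
    (hKv x).subset hball (convex_ball _ _)
  obtain ⟨p, hp⟩ := exists_supergradient hr hFu
  obtain ⟨q, hq⟩ := exists_supergradient hr hFv
  set P : EuclideanSpace ℝ (Fin d) →L[ℝ] ℝ := p + (2 * Ku) • (innerSL ℝ x₀) with hPdef
  set Q : EuclideanSpace ℝ (Fin d) →L[ℝ] ℝ := q + (2 * Kv) • (innerSL ℝ x₀) with hQdef
  have hPapp : ∀ z : EuclideanSpace ℝ (Fin d),
      P z = p z + 2 * Ku * (inner ℝ x₀ z : ℝ) := by
    intro z
    simp only [hPdef, ContinuousLinearMap.add_apply, ContinuousLinearMap.smul_apply,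
      innerSL_apply_apply, smul_eq_mul]
  have hQapp : ∀ z : EuclideanSpace ℝ (Fin d),
      Q z = q z + 2 * Kv * (inner ℝ x₀ z : ℝ) := by
    intro z
    simp only [hQdef, ContinuousLinearMap.add_apply, ContinuousLinearMap.smul_apply,
      innerSL_apply_apply, smul_eq_mul]
  have hnorm : ∀ y : EuclideanSpace ℝ (Fin d),
      ‖y‖ ^ 2 - ‖x₀‖ ^ 2 = 2 * (inner ℝ x₀ (y - x₀) : ℝ) + ‖y - x₀‖ ^ 2 := by
    intro y
    have h1 : y = x₀ + (y - x₀) := by abel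
    calc ‖y‖ ^ 2 - ‖x₀‖ ^ 2 = ‖x₀ + (y - x₀)‖ ^ 2 - ‖x₀‖ ^ 2 := by rw [← h1]
      _ = 2 * (inner ℝ x₀ (y - x₀) : ℝ) + ‖y - x₀‖ ^ 2 := by
          rw [norm_add_sq_real]; ring
  -- upper bounds from the supergradients
  have hφup : ∀ y ∈ ball x₀ r, φ y - φ x₀ ≤ P (y - x₀) + Ku * ‖y - x₀‖ ^ 2 := by
    intro y hy
    have h1 := hp y hy
    have h3 : Ku * ‖y‖ ^ 2 - Ku * ‖x₀‖ ^ 2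
        = 2 * Ku * (inner ℝ x₀ (y - x₀) : ℝ) + Ku * ‖y - x₀‖ ^ 2 := by
      linear_combination Ku * hnorm y
    rw [hPapp]
    linarith
  have hψup : ∀ y ∈ ball x₀ r, ψ y - ψ x₀ ≤ Q (y - x₀) + Kv * ‖y - x₀‖ ^ 2 := by
    intro y hy
    have h1 := hq y hy
    have h3 : Kv * ‖y‖ ^ 2 - Kv * ‖x₀‖ ^ 2
        = 2 * Kv * (inner ℝ x₀ (y - x₀) : ℝ) + Kv * ‖y - x₀‖ ^ 2 := by
      linear_combination Kv * hnorm y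
    rw [hQapp]
    linarith
  -- the minimum property in the chart
  have hmin : ∀ y ∈ ball x₀ r, φ x₀ + ψ x₀ ≤ φ y + ψ y := by
    intro y _
    rw [hφx₀, hψx₀]
    exact hx (e.symm y)
  -- P + Q = 0
  have hPQ : P + Q = 0 := by
    refine linear_eq_zero_of_quadratic_lower (C := Ku + Kv) hr fun z hz => ?_
    have hymem : x₀ + z ∈ ball x₀ r := by
      rw [mem_ball_iff_norm, add_sub_cancel_left]
      exact hz
    have h1 := hφup _ hymem
    have h2 := hψup _ hymem
    have h3 := hmin _ hymem
    rw [add_sub_cancel_left] at h1 h2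
    rw [ContinuousLinearMap.add_apply]
    have hring : (Ku + Kv) * ‖z‖ ^ 2 = Ku * ‖z‖ ^ 2 + Kv * ‖z‖ ^ 2 := by ring
    linarith
  have hQP : ∀ z : EuclideanSpace ℝ (Fin d), Q z = -P z := by
    intro z
    have h1 : (P + Q) z = (0 : EuclideanSpace ℝ (Fin d) →L[ℝ] ℝ) z := by rw [hPQ]
    simp only [ContinuousLinearMap.add_apply, ContinuousLinearMap.zero_apply] at h1
    linarith
  -- quadratic two-sided bounds
  have habs : ∀ z : EuclideanSpace ℝ (Fin d),
      Ku * ‖z‖ ^ 2 ≤ |Ku| * ‖z‖ ^ 2 ∧ -(|Kv| * ‖z‖ ^ 2) ≤ Kv * ‖z‖ ^ 2 ∧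
      Kv * ‖z‖ ^ 2 ≤ |Kv| * ‖z‖ ^ 2 ∧ -(|Ku| * ‖z‖ ^ 2) ≤ Ku * ‖z‖ ^ 2 ∧
      0 ≤ |Ku| * ‖z‖ ^ 2 ∧ 0 ≤ |Kv| * ‖z‖ ^ 2 := by
    intro z
    refine ⟨mul_le_mul_of_nonneg_right (le_abs_self Ku) (sq_nonneg _), ?_,
      mul_le_mul_of_nonneg_right (le_abs_self Kv) (sq_nonneg _), ?_, by positivity, by positivity⟩
    · have := mul_le_mul_of_nonneg_right (neg_abs_le Kv) (sq_nonneg ‖z‖)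
      linarith
    · have := mul_le_mul_of_nonneg_right (neg_abs_le Ku) (sq_nonneg ‖z‖)
      linarith
  have hφbd : ∀ y ∈ ball x₀ r,
      |φ y - φ x₀ - P (y - x₀)| ≤ (|Ku| + |Kv|) * ‖y - x₀‖ ^ 2 := by
    intro y hy
    have h1 := hφup y hy
    have h2 := hψup y hy
    have h3 := hmin y hy
    have h4 := hQP (y - x₀)
    obtain ⟨a1, a2, a3, a4, a5, a6⟩ := habs (y - x₀)
    have hring : (|Ku| + |Kv|) * ‖y - x₀‖ ^ 2 = |Ku| * ‖y - x₀‖ ^ 2 + |Kv| * ‖y - x₀‖ ^ 2 := by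
      ring
    rw [abs_le]
    constructor <;> linarith
  have hψbd : ∀ y ∈ ball x₀ r,
      |ψ y - ψ x₀ - Q (y - x₀)| ≤ (|Ku| + |Kv|) * ‖y - x₀‖ ^ 2 := by
    intro y hy
    have h1 := hφup y hy
    have h2 := hψup y hy
    have h3 := hmin y hy
    have h4 := hQP (y - x₀)
    obtain ⟨a1, a2, a3, a4, a5, a6⟩ := habs (y - x₀)
    have hring : (|Ku| + |Kv|) * ‖y - x₀‖ ^ 2 = |Ku| * ‖y - x₀‖ ^ 2 + |Kv| * ‖y - x₀‖ ^ 2 := by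
      ring
    rw [abs_le]
    constructor <;> linarith
  have hφd : HasFDerivAt φ P x₀ := hasFDerivAt_of_quadratic_bound hr hφbd
  have hψd : HasFDerivAt ψ Q x₀ := hasFDerivAt_of_quadratic_bound hr hψbd
  -- back to the manifold
  have hueq : u =ᶠ[𝓝 x] φ ∘ e := by
    filter_upwards [extChartAt_source_mem_nhds (I := 𝓡 d) x] with y hy
    simp only [Function.comp_apply, hφdef]
    rw [e.left_inv hy]
  have hveq : v =ᶠ[𝓝 x] ψ ∘ e := by
    filter_upwards [extChartAt_source_mem_nhds (I := 𝓡 d) x] with y hy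
    simp only [Function.comp_apply, hψdef]
    rw [e.left_inv hy]
  have heM : MDifferentiableAt (𝓡 d) 𝓘(ℝ, EuclideanSpace ℝ (Fin d)) e x :=
    (contMDiffAt_extChartAt (n := 1)).mdifferentiableAt one_ne_zero
  have hφM : MDifferentiableAt 𝓘(ℝ, EuclideanSpace ℝ (Fin d)) 𝓘(ℝ, ℝ) φ (e x) :=
    hφd.differentiableAt.mdifferentiableAt
  have hψM : MDifferentiableAt 𝓘(ℝ, EuclideanSpace ℝ (Fin d)) 𝓘(ℝ, ℝ) ψ (e x) :=
    hψd.differentiableAt.mdifferentiableAt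
  have huM : MDifferentiableAt (𝓡 d) 𝓘(ℝ, ℝ) u x :=
    (hφM.comp x heM).congr_of_eventuallyEq hueq
  have hvM : MDifferentiableAt (𝓡 d) 𝓘(ℝ, ℝ) v x :=
    (hψM.comp x heM).congr_of_eventuallyEq hveq
  refine ⟨huM, hvM, ?_⟩
  have hmu : mfderiv (𝓡 d) 𝓘(ℝ, ℝ) u x
      = (mfderiv 𝓘(ℝ, EuclideanSpace ℝ (Fin d)) 𝓘(ℝ, ℝ) φ (e x)).comp
        (mfderiv (𝓡 d) 𝓘(ℝ, EuclideanSpace ℝ (Fin d)) e x) := by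
    rw [hueq.mfderiv_eq, mfderiv_comp x hφM heM]
  have hmv : mfderiv (𝓡 d) 𝓘(ℝ, ℝ) v x
      = (mfderiv 𝓘(ℝ, EuclideanSpace ℝ (Fin d)) 𝓘(ℝ, ℝ) ψ (e x)).comp
        (mfderiv (𝓡 d) 𝓘(ℝ, EuclideanSpace ℝ (Fin d)) e x) := by
    rw [hveq.mfderiv_eq, mfderiv_comp x hψM heM]
  have hdφ : mfderiv 𝓘(ℝ, EuclideanSpace ℝ (Fin d)) 𝓘(ℝ, ℝ) φ (e x) = P := by
    rw [mfderiv_eq_fderiv, hφd.fderiv]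
  have hdψ : mfderiv 𝓘(ℝ, EuclideanSpace ℝ (Fin d)) 𝓘(ℝ, ℝ) ψ (e x) = Q := by
    rw [mfderiv_eq_fderiv, hψd.fderiv]
  have hQnegP : Q = -P := by
    ext z
    simp only [ContinuousLinearMap.neg_apply]
    exact hQP z
  rw [hmu, hmv, hdφ, hdψ, hQnegP]
  ext z
  exact (neg_neg _).symm
end

section
/- Let M be a compact metric space, A : M × M → ℝ continuous, and α ∈ ℝ. Define T u(x) = min_y (u(y) + A(y, x)). Let 𝕄 be a nonempty family of continuous functions u on M each satisfying T u + α = u, and suppose v(x) := inf_{u ∈ 𝕄} u(x) is finite for some (hence, assuming the family is equi-Lipschitz, every) x ∈ M. If moreover the family 𝕄 is equi-Lipschitz, then v is continuous and satisfies T v + α = v. -/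
/-- The pointwise infimum of an equi-Lipschitz family of fixed points of the
Lax–Oleinik operator `T + α`, finite at some point, is a continuous fixed
point of `T + α`. -/
theorem stmt_7 {M : Type*} [MetricSpace M] [CompactSpace M] [Nonempty M]
    (A : M → M → ℝ) (hA : Continuous fun p : M × M => A p.1 p.2) (α : ℝ)
    (T : (M → ℝ) → M → ℝ)
    (hT : ∀ (f : M → ℝ) (x : M), T f x = ⨅ y : M, (f y + A y x))
    (𝕄 : Set (M → ℝ)) (hne : 𝕄.Nonempty)
    (hcont : ∀ u ∈ 𝕄, Continuous u)
    (hfix : ∀ u ∈ 𝕄, ∀ x, T u x + α = u x)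
    (hfin : ∃ x₀ : M, BddBelow ((fun u : M → ℝ => u x₀) '' 𝕄))
    (hlip : ∃ L : NNReal, ∀ u ∈ 𝕄, LipschitzWith L u) :
    Continuous (fun x : M => ⨅ u : 𝕄, (u : M → ℝ) x) ∧
      ∀ x, T (fun z : M => ⨅ u : 𝕄, (u : M → ℝ) z) x + α
        = ⨅ u : 𝕄, (u : M → ℝ) x := by
  haveI : Nonempty ↥𝕄 := hne.to_subtype
  obtain ⟨L, hL⟩ := hlip
  obtain ⟨x₀, c, hc⟩ := hfin
  have hc' : ∀ u : 𝕄, c ≤ (u : M → ℝ) x₀ := fun u =>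
    hc ⟨u, u.2, rfl⟩
  set v : M → ℝ := fun x => ⨅ u : 𝕄, (u : M → ℝ) x with hv
  -- pointwise boundedness below
  have hB : ∀ x : M, BddBelow (Set.range fun u : 𝕄 => (u : M → ℝ) x) := by
    intro x
    refine ⟨c - L * dist x₀ x, ?_⟩
    rintro b ⟨u, rfl⟩
    have h1 : dist ((u : M → ℝ) x₀) ((u : M → ℝ) x) ≤ L * dist x₀ x :=
      (hL u u.2).dist_le_mul x₀ x
    have h2 : (u : M → ℝ) x₀ - (u : M → ℝ) x ≤ L * dist x₀ x :=
      (le_abs_self _).trans (by rwa [Real.dist_eq] at h1)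
    have := hc' u
    linarith
  have hvle : ∀ (u : 𝕄) (x : M), v x ≤ (u : M → ℝ) x := fun u x =>
    ciInf_le (hB x) u
  -- v is Lipschitz
  have hvlip : LipschitzWith L v := by
    refine LipschitzWith.of_dist_le_mul fun x y => ?_
    rw [Real.dist_eq, abs_sub_le_iff]
    constructor
    · have key : v x - L * dist x y ≤ v y := by
        refine le_ciInf fun u => ?_
        have h1 : dist ((u : M → ℝ) x) ((u : M → ℝ) y) ≤ L * dist x y :=
          (hL u u.2).dist_le_mul x y
        have h2 : (u : M → ℝ) x - (u : M → ℝ) y ≤ L * dist x y :=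
          (le_abs_self _).trans (by rwa [Real.dist_eq] at h1)
        have := hvle u x
        linarith
      linarith
    · have key : v y - L * dist x y ≤ v x := by
        refine le_ciInf fun u => ?_
        have h1 : dist ((u : M → ℝ) y) ((u : M → ℝ) x) ≤ L * dist x y :=
          ((hL u u.2).dist_le_mul y x).trans (by rw [dist_comm])
        have h2 : (u : M → ℝ) y - (u : M → ℝ) x ≤ L * dist x y :=
          (le_abs_self _).trans (by rwa [Real.dist_eq] at h1)
        have := hvle u y
        linarith
      linarith
  refine ⟨hvlip.continuous, fun x => ?_⟩
  -- boundedness of the inner infima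
  obtain ⟨m, hm⟩ := (isCompact_univ.image hA).bddBelow
  have hmA : ∀ y z : M, m ≤ A y z := fun y z => hm ⟨(y, z), Set.mem_univ _, rfl⟩
  obtain ⟨mv, hmv⟩ := (isCompact_univ.image hvlip.continuous).bddBelow
  have hmv' : ∀ y, mv ≤ v y := fun y => hmv ⟨y, Set.mem_univ _, rfl⟩
  have hBv : BddBelow (Set.range fun y : M => v y + A y x) :=
    ⟨mv + m, by rintro b ⟨y, rfl⟩; exact add_le_add (hmv' y) (hmA y x)⟩
  rw [hT]
  apply le_antisymm
  · -- T v x + α ≤ v x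
    refine le_ciInf fun u => ?_
    rw [← hfix u u.2 x, hT]
    have : (⨅ y : M, (v y + A y x)) ≤ ⨅ y : M, ((u : M → ℝ) y + A y x) := by
      refine le_ciInf fun y => ?_
      exact (ciInf_le hBv y).trans (add_le_add_left (hvle u y) _)
    linarith
  · -- v x ≤ T v x + α
    rw [← sub_le_iff_le_add]
    refine le_ciInf fun y => ?_
    have key : v x - A y x - α ≤ v y := by
      refine le_ciInf fun u => ?_
      have h1 : (u : M → ℝ) x ≤ (u : M → ℝ) y + A y x + α := by
        have hfx := hfix u u.2 x
        rw [hT] at hfx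
        have h2 : (⨅ z : M, ((u : M → ℝ) z + A z x)) ≤ (u : M → ℝ) y + A y x := by
          refine ciInf_le ?_ y
          obtain ⟨mu, hmu⟩ := (isCompact_univ.image (hcont u u.2)).bddBelow
          refine ⟨mu + m, ?_⟩
          rintro b ⟨z, rfl⟩
          exact add_le_add (hmu ⟨z, Set.mem_univ _, rfl⟩) (hmA z x)
        linarith
      have := hvle u x
      linarith
    linarith
end

section
/- Let M be a compact metric space, A : M × M → ℝ continuous, α ∈ ℝ, and T u(x) = min_y (u(y) + A(y, x)). Suppose the functions T^n u + nα, n ≥ 1, are equi-bounded and equi-Lipschitz for a given continuous u. Then v := liminf_{n → ∞} (T^n u + nα) (taken pointwise) is a fixed point of T + α, i.e., T v + α = v. -/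
open Filter Topology

private lemma exists_min' {M : Type*} [MetricSpace M] [CompactSpace M] [Nonempty M]
    {f : M → ℝ} (hf : Continuous f) : ∃ x, ∀ y, f x ≤ f y :=
  hf.exists_forall_le' (Classical.arbitrary M)
    (by simp [Filter.cocompact_eq_bot])

private lemma isBU_le {f : ℕ → ℝ} {c : ℝ} (h : ∀ᶠ n in atTop, f n ≤ c) :
    IsBoundedUnder (· ≤ ·) atTop f := ⟨c, eventually_map.mpr h⟩

private lemma isBU_ge {f : ℕ → ℝ} {c : ℝ} (h : ∀ᶠ n in atTop, c ≤ f n) :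
    IsBoundedUnder (· ≥ ·) atTop f := ⟨c, eventually_map.mpr h⟩

/-- liminf along a subsequence (or any map tending to `atTop`) is at least the liminf. -/
private lemma liminf_le_liminf_comp' {a : ℕ → ℝ} {φ : ℕ → ℕ}
    (hφ : Tendsto φ atTop atTop)
    (hco : IsCoboundedUnder (· ≥ ·) atTop a)
    (hb : IsBoundedUnder (· ≥ ·) atTop a)
    (hb2 : IsBoundedUnder (· ≤ ·) atTop (a ∘ φ)) :
    liminf a atTop ≤ liminf (a ∘ φ) atTop := by
  by_contra hcon
  push_neg at hcon
  obtain ⟨b, hb1, hb2'⟩ := exists_between hcon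
  have hev : ∀ᶠ n in atTop, b < a n := eventually_lt_of_lt_liminf hb2' hb
  have hev2 : ∀ᶠ k in atTop, b < a (φ k) := hφ.eventually hev
  have : b ≤ liminf (a ∘ φ) atTop :=
    le_liminf_of_le hb2.isCoboundedUnder_ge (hev2.mono fun k hk => hk.le)
  exact absurd (lt_of_le_of_lt this hb1) (lt_irrefl _)

private lemma fixed_aux {M : Type*} [MetricSpace M] [CompactSpace M] [Nonempty M]
    (A : M → M → ℝ) (hA : Continuous fun p : M × M => A p.1 p.2) (α : ℝ)
    (v : ℕ → M → ℝ) (C : ℝ) (L : NNReal)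
    (hC : ∀ n : ℕ, 1 ≤ n → ∀ x, |v n x| ≤ C)
    (hL : ∀ n : ℕ, 1 ≤ n → LipschitzWith L (v n))
    (hkey : ∀ (n : ℕ) (x : M), ∃ y0, v (n+2) x = v (n+1) y0 + A y0 x + α ∧
      ∀ y, v (n+1) y0 + A y0 x ≤ v (n+1) y + A y x)
    (x : M) :
    (⨅ y, Filter.liminf (fun n => v n y) Filter.atTop + A y x) + α
      = Filter.liminf (fun n => v n x) Filter.atTop := by
  classical
  set w : M → ℝ := fun z => liminf (fun n => v n z) atTop with hwdef
  have hubS : ∀ z (m : ℕ), 1 ≤ m → v m z ≤ C := fun z m hm => (abs_le.mp (hC m hm z)).2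
  have hlbS : ∀ z (m : ℕ), 1 ≤ m → -C ≤ v m z := fun z m hm => (abs_le.mp (hC m hm z)).1
  have hub : ∀ z, ∀ᶠ n in atTop, v n z ≤ C := by
    intro z
    filter_upwards [eventually_ge_atTop 1] with n hn using hubS z n hn
  have hlb : ∀ z, ∀ᶠ n in atTop, -C ≤ v n z := by
    intro z
    filter_upwards [eventually_ge_atTop 1] with n hn using hlbS z n hn
  have hBle : ∀ z, IsBoundedUnder (· ≤ ·) atTop (fun n => v n z) := fun z => isBU_le (hub z)
  have hBge : ∀ z, IsBoundedUnder (· ≥ ·) atTop (fun n => v n z) := fun z => isBU_ge (hlb z)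
  have hwlb : ∀ z, -C ≤ w z := fun z =>
    le_liminf_of_le (hBle z).isCoboundedUnder_ge (hlb z)
  have hAx : ∀ x' : M, Continuous fun y => A y x' := fun x' =>
    hA.comp (Continuous.prodMk_left x')
  -- step inequality
  have hrec_le : ∀ (n : ℕ) (x' : M) (y : M), v (n+2) x' ≤ v (n+1) y + A y x' + α := by
    intro n x' y
    obtain ⟨y0, h1, h2⟩ := hkey n x'
    rw [h1]
    linarith [h2 y]
  -- Inequality 1 : w x ≤ w y + A y x + α for all x y
  have hineq1 : ∀ (x' y : M), w x' ≤ w y + A y x' + α := by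
    intro x' y
    have h1 : w x' = liminf (fun n => v (n+2) x') atTop := by
      rw [hwdef]
      exact (liminf_nat_add (fun n => v n x') 2).symm
    have hb1 : IsBoundedUnder (· ≥ ·) atTop (fun n => v (n+2) x') :=
      isBU_ge (Eventually.of_forall fun n => hlbS x' (n+2) (by omega))
    have hb2 : IsCoboundedUnder (· ≥ ·) atTop (fun n => v (n+1) y + (A y x' + α)) :=
      IsBoundedUnder.isCoboundedUnder_ge
        (isBU_le (c := C + (A y x' + α)) (Eventually.of_forall fun n => by
          have := hubS y (n+1) (by omega); linarith))
    have h2 : liminf (fun n => v (n+2) x') atTop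
        ≤ liminf (fun n => v (n+1) y + (A y x' + α)) atTop := by
      refine liminf_le_liminf (Eventually.of_forall fun n => ?_) hb1 hb2
      have := hrec_le n x' y
      linarith
    have h3 : liminf (fun n => v (n+1) y + (A y x' + α)) atTop
        = liminf (fun n => v (n+1) y) atTop + (A y x' + α) :=
      liminf_add_const atTop (fun n => v (n+1) y) (A y x' + α)
        (IsBoundedUnder.isCoboundedUnder_ge
          (isBU_le (Eventually.of_forall fun n => hubS y (n+1) (by omega))))
        (isBU_ge (Eventually.of_forall fun n => hlbS y (n+1) (by omega)))
    have h4 : liminf (fun n => v (n+1) y) atTop = w y := by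
      rw [hwdef]
      exact liminf_nat_add (fun n => v n y) 1
    rw [h1]
    rw [h3, h4] at h2
    linarith
  -- Inequality 2 : (⨅ y, w y + A y x) + α ≤ w x
  have hineq2 : (⨅ y, w y + A y x) + α ≤ w x := by
    choose Y hY1 hY2 using fun n => hkey n x
    have hsh : liminf (fun n => v (n+2) x) atTop = w x := by
      rw [hwdef]
      exact liminf_nat_add (fun n => v n x) 2
    have hb1 : IsBoundedUnder (· ≥ ·) atTop (fun n => v (n+2) x) :=
      isBU_ge (Eventually.of_forall fun n => hlbS x (n+2) (by omega))
    have hb1' : IsBoundedUnder (· ≤ ·) atTop (fun n => v (n+2) x) :=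
      isBU_le (Eventually.of_forall fun n => hubS x (n+2) (by omega))
    have hfreq : ∀ k : ℕ, ∃ᶠ n in atTop, |v (n+2) x - w x| < 1/(k+1) := by
      intro k
      have hε : (0:ℝ) < 1/((k:ℝ)+1) := by positivity
      have h1 : ∃ᶠ n in atTop, v (n+2) x < w x + 1/((k:ℝ)+1) := by
        refine frequently_lt_of_liminf_lt hb1'.isCoboundedUnder_ge ?_
        rw [hsh]; linarith
      have h2 : ∀ᶠ n in atTop, w x - 1/((k:ℝ)+1) < v (n+2) x := by
        refine eventually_lt_of_lt_liminf ?_ hb1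
        rw [hsh]; linarith
      refine (h1.and_eventually h2).mono fun n ⟨ha, hb⟩ => ?_
      rw [abs_sub_lt_iff]
      constructor <;> [linarith; linarith]
    obtain ⟨φ, hφmono, hφ⟩ := extraction_forall_of_frequently hfreq
    have htend : Tendsto (fun k => v (φ k + 2) x) atTop (𝓝 (w x)) := by
      rw [tendsto_iff_dist_tendsto_zero]
      refine squeeze_zero (g := fun k : ℕ => 1/((k:ℝ)+1)) (fun k => dist_nonneg)
        (fun k => le_of_lt (by rw [Real.dist_eq]; exact hφ k))
        tendsto_one_div_add_atTop_nhds_zero_nat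
    obtain ⟨ystar, ψ, hψmono, hψtend⟩ := CompactSpace.tendsto_subseq (fun k => Y (φ k))
    set n' : ℕ → ℕ := fun k => φ (ψ k) with hn'
    have hn'mono : StrictMono n' := hφmono.comp hψmono
    have hytend : Tendsto (fun k => Y (n' k)) atTop (𝓝 ystar) := hψtend
    have hctend : Tendsto (fun k => v (n' k + 2) x) atTop (𝓝 (w x)) := by
      have := htend.comp hψmono.tendsto_atTop
      exact this
    -- the limit-estimate
    set b : ℕ → ℝ := fun k => A (Y (n' k)) x + α - L * dist (Y (n' k)) ystar with hbdefn
    set a : ℕ → ℝ := fun k => v (n' k + 1) ystar with hadefn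
    have hest : ∀ k, a k + b k ≤ v (n' k + 2) x := by
      intro k
      have h1 := hY1 (n' k)
      have hLip := hL (n' k + 1) (by omega)
      have hd := hLip.dist_le_mul ystar (Y (n' k))
      rw [Real.dist_eq] at hd
      have h2 : v (n' k + 1) ystar - v (n' k + 1) (Y (n' k))
          ≤ (L : ℝ) * dist ystar (Y (n' k)) := (le_abs_self _).trans hd
      rw [dist_comm] at h2
      have h3 := hY2 (n' k) x
      simp only [hadefn, hbdefn]
      rw [h1]
      linarith
    have hbtend : Tendsto b atTop (𝓝 (A ystar x + α - L * 0)) := by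
      refine Tendsto.sub (Tendsto.add ?_ tendsto_const_nhds) ?_
      · exact ((hAx x).tendsto ystar).comp hytend
      · refine tendsto_const_nhds.mul ?_
        have := hytend.dist (tendsto_const_nhds : Tendsto (fun _ : ℕ => ystar) atTop (𝓝 ystar))
        simpa using this
    have hbtend' : Tendsto b atTop (𝓝 (A ystar x + α)) := by
      simpa using hbtend
    have ha_ge : IsBoundedUnder (· ≥ ·) atTop a :=
      isBU_ge (Eventually.of_forall fun k => hlbS ystar _ (by omega))
    have ha_le : IsBoundedUnder (· ≤ ·) atTop a :=
      isBU_le (Eventually.of_forall fun k => hubS ystar _ (by omega))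
    -- liminf a ≥ w ystar
    have hwy : w ystar ≤ liminf a atTop := by
      have hφ' : Tendsto (fun k => n' k + 1) atTop atTop := by
        have : StrictMono (fun k => n' k + 1) := fun i j hij =>
          Nat.add_lt_add_right (hn'mono hij) 1
        exact this.tendsto_atTop
      have := liminf_le_liminf_comp' (a := fun n => v n ystar) (φ := fun k => n' k + 1)
        hφ' (hBle ystar).isCoboundedUnder_ge (hBge ystar)
        (isBU_le (f := (fun n => v n ystar) ∘ fun k => n' k + 1)
          (Eventually.of_forall fun k => hubS ystar (n' k + 1) (by omega)))
      exact this
    -- put everything together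
    have hmain : w ystar + (A ystar x + α) ≤ w x := by
      have h5 : liminf (fun k => v (n' k + 2) x) atTop = w x := hctend.liminf_eq
      have h6 : liminf (a + b) atTop ≤ liminf (fun k => v (n' k + 2) x) atTop := by
        refine liminf_le_liminf (Eventually.of_forall fun k => ?_) ?_ ?_
        · exact hest k
        · exact Filter.isBoundedUnder_ge_add ha_ge hbtend'.isBoundedUnder_ge
        · exact IsBoundedUnder.isCoboundedUnder_ge
            (isBU_le (Eventually.of_forall fun k => hubS x _ (by omega)))
      have h7 : liminf a atTop + liminf b atTop ≤ liminf (a + b) atTop :=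
        le_liminf_add ha_ge ha_le hbtend'.isBoundedUnder_ge
          hbtend'.isCoboundedUnder_ge
      have h8 : liminf b atTop = A ystar x + α := hbtend'.liminf_eq
      rw [h8] at h7
      rw [h5] at h6
      linarith
    -- the infimum is at most the value at ystar
    obtain ⟨ym, hym⟩ := exists_min' (hAx x)
    have hbddb : BddBelow (Set.range fun y => w y + A y x) := by
      refine ⟨-C + A ym x, ?_⟩
      rintro _ ⟨y, rfl⟩
      have := hym y
      have := hwlb y
      simp only
      linarith
    have h9 : (⨅ y, w y + A y x) ≤ w ystar + A ystar x := ciInf_le hbddb ystar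
    linarith
  refine le_antisymm hineq2 ?_
  have : ∀ y, w x - α ≤ w y + A y x := fun y => by
    have := hineq1 x y; linarith
  have := le_ciInf this
  linarith

/-- If the functions `T^n u + nα` are equi-bounded and equi-Lipschitz, then
`v := liminf_n (T^n u + nα)` is a fixed point of `T + α`. -/
theorem stmt_8 {M : Type*} [MetricSpace M] [CompactSpace M] [Nonempty M]
    (A : M → M → ℝ) (hA : Continuous fun p : M × M => A p.1 p.2) (α : ℝ)
    (T : (M → ℝ) → M → ℝ)
    (hT : ∀ (f : M → ℝ) (x : M), T f x = ⨅ y : M, (f y + A y x))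
    (u : M → ℝ) (hu : Continuous u)
    (hbdd : ∃ C : ℝ, ∀ n : ℕ, 1 ≤ n → ∀ x, |T^[n] u x + n * α| ≤ C)
    (hlip : ∃ L : NNReal, ∀ n : ℕ, 1 ≤ n →
      LipschitzWith L (fun x => T^[n] u x + n * α)) :
    ∀ x, T (fun z : M => Filter.liminf (fun n : ℕ => T^[n] u z + n * α) Filter.atTop) x + α
      = Filter.liminf (fun n : ℕ => T^[n] u x + n * α) Filter.atTop := by
  classical
  obtain ⟨C, hC⟩ := hbdd
  obtain ⟨L, hL⟩ := hlip
  set v : ℕ → M → ℝ := fun n z => T^[n] u z + n * α with hv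
  have hC' : ∀ n : ℕ, 1 ≤ n → ∀ x, |v n x| ≤ C := hC
  have hL' : ∀ n : ℕ, 1 ≤ n → LipschitzWith L (v n) := hL
  have hvcont : ∀ n : ℕ, Continuous (v (n+1)) := fun n =>
    (hL' (n+1) (by omega)).continuous
  have hAx : ∀ x : M, Continuous fun y => A y x := fun x =>
    hA.comp (Continuous.prodMk_left x)
  have hkey : ∀ (n : ℕ) (x : M), ∃ y0, v (n+2) x = v (n+1) y0 + A y0 x + α ∧
      ∀ y, v (n+1) y0 + A y0 x ≤ v (n+1) y + A y x := by
    intro n x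
    obtain ⟨y0, hy0⟩ := exists_min' ((hvcont n).add (hAx x))
    refine ⟨y0, ?_, hy0⟩
    have hit : T^[n+2] u x = ⨅ y, T^[n+1] u y + A y x := by
      rw [show n+2 = (n+1)+1 from rfl, Function.iterate_succ_apply']
      exact hT _ x
    have hg1 : (⨅ y, T^[n+1] u y + A y x) = T^[n+1] u y0 + A y0 x := by
      refine le_antisymm (ciInf_le ⟨T^[n+1] u y0 + A y0 x, ?_⟩ y0) (le_ciInf fun z => ?_)
      · rintro _ ⟨z, rfl⟩
        show T^[n+1] u y0 + A y0 x ≤ T^[n+1] u z + A z x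
        have := hy0 z
        simp only [hv, Pi.add_apply] at this
        linarith
      · show T^[n+1] u y0 + A y0 x ≤ T^[n+1] u z + A z x
        have := hy0 z
        simp only [hv, Pi.add_apply] at this
        linarith
    simp only [hv]
    rw [show n+2 = (n+1)+1 from rfl, Function.iterate_succ_apply', hT _ x, hg1]
    push_cast
    ring
  have := fixed_aux A hA α v C L hC' hL' hkey
  intro x
  rw [hT]
  exact this x
end
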